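/- Let X be a metric space, x ∈ X, r > 0, and let h be an injective partial function whose domain and range are contained in the open ball B(x,r). Let K, N > 0 with 1 + 1/N ≤ K. If h is K-bilipschitz and N-bigood (with respect to the center x and radius r), then the map h ∪ id_{X∖B(x,r)} (equal to h on the domain of h and to the identity on X ∖ B(x,r)) is K-bilipschitz. -/

import Mathlib

/-!
A point `u` of the domain and a point `v` outside the ball are at distance at least
`r - d(u, x)`, while goodness moves `u` by at most `1/N` of that amount; hence `d(h u, v)` is
within a factor `1 + 1/N ≤ K` of `d(u, v)`, and goodness of `h⁻¹` gives the reverse bound.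
-/

open Metric Set
open scoped Classical

/-- `f` is `K`-bilipschitz on the set `A`. -/
def BilipschitzOn {X : Type} [MetricSpace X] (K : ℝ) (f : X → X) (A : Set X) : Prop :=
  ∀ u ∈ A, ∀ v ∈ A,
    (1 / K) * dist u v ≤ dist (f u) (f v) ∧ dist (f u) (f v) ≤ K * dist u v

/-- `f` is `N`-good on `A` with respect to the ball `B(x,r)`. -/
def NGoodOn {X : Type} [MetricSpace X] (N : ℝ) (x : X) (r : ℝ) (f : X → X) (A : Set X) : Prop :=
  ∀ y ∈ A, dist y (f y) ≤ (1 / N) * (r - dist y x)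

/-- `f` is `N`-bigood on `A` with respect to the ball `B(x,r)`:
both `f` and its inverse are `N`-good. -/
def NBigoodOn {X : Type} [MetricSpace X] (N : ℝ) (x : X) (r : ℝ) (f : X → X) (A : Set X) : Prop :=
  NGoodOn N x r f A ∧ ∀ y ∈ A, dist (f y) y ≤ (1 / N) * (r - dist (f y) x)

section

variable {X : Type*} [PseudoMetricSpace X] {x a b v : X} {r c : ℝ}

lemma sub_dist_le_dist_of_notMem_ball (hv : v ∉ ball x r) : r - dist a x ≤ dist a v := by
  rw [mem_ball, not_lt] at hv
  linarith [dist_triangle v a x, dist_comm v a]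

lemma dist_le_one_add_mul_of_dist_le_mul_sub_dist (hc : 0 ≤ c) (hv : v ∉ ball x r)
    (hab : dist a b ≤ c * (r - dist a x)) : dist b v ≤ (1 + c) * dist a v :=
  calc dist b v ≤ dist a b + dist a v := dist_triangle_left b v a
    _ ≤ c * dist a v + dist a v := by
      gcongr
      exact hab.trans (by gcongr; exact sub_dist_le_dist_of_notMem_ball hv)
    _ = (1 + c) * dist a v := by ring

end

lemma NBigoodOn.dist_bounds_of_notMem_ball {X : Type} [MetricSpace X] {N K r : ℝ} {x u v : X}
    {h : X → X} {A : Set X} (hgood : NBigoodOn N x r h A) (hN : 0 < N) (hKN : 1 + 1 / N ≤ K)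
    (hu : u ∈ A) (hv : v ∉ ball x r) :
    1 / K * dist u v ≤ dist (h u) v ∧ dist (h u) v ≤ K * dist u v := by
  have hN' : 0 ≤ 1 / N := by positivity
  have hK : 0 < K := by linarith
  constructor
  · rw [one_div_mul_eq_div, div_le_iff₀' hK]
    calc dist u v ≤ (1 + 1 / N) * dist (h u) v :=
          dist_le_one_add_mul_of_dist_le_mul_sub_dist hN' hv (hgood.2 u hu)
      _ ≤ K * dist (h u) v := by gcongr
  · calc dist (h u) v ≤ (1 + 1 / N) * dist u v :=
          dist_le_one_add_mul_of_dist_le_mul_sub_dist hN' hv (hgood.1 u hu)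
      _ ≤ K * dist u v := by gcongr

theorem bilipschitz_union_id_general (X : Type) [MetricSpace X] (x : X) (r : ℝ)
    (K N : ℝ) (hN : 0 < N) (hKN : 1 + 1 / N ≤ K)
    (A : Set X) (h : X → X)
    (hbil : BilipschitzOn K h A) (hgood : NBigoodOn N x r h A) :
    BilipschitzOn K (fun z => if z ∈ A then h z else z) (A ∪ (ball x r)ᶜ) := by
  have hK : 1 ≤ K := le_trans (le_add_of_nonneg_right (by positivity)) hKN
  intro u hu v hv
  by_cases huA : u ∈ A <;> by_cases hvA : v ∈ A <;> simp only [huA, hvA, ↓reduceIte]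
  · exact hbil u huA v hvA
  · exact hgood.dist_bounds_of_notMem_ball hN hKN huA (hv.resolve_left hvA)
  · rw [dist_comm u v, dist_comm u (h v)]
    exact hgood.dist_bounds_of_notMem_ball hN hKN hvA (hu.resolve_left huA)
  · exact ⟨mul_le_of_le_one_left dist_nonneg (div_le_one_of_le₀ hK (by positivity)),
      le_mul_of_one_le_left dist_nonneg hK⟩

/-- If `h` is `K`-bilipschitz and `N`-bigood on a subset of `B(x,r)`
(with `1 + 1/N ≤ K`), then `h ∪ id_{X ∖ B(x,r)}` is `K`-bilipschitz. -/
theorem bilipschitz_union_id (X : Type) [MetricSpace X] (x : X) (r : ℝ) (hr : 0 < r)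
    (K N : ℝ) (hK : 0 < K) (hN : 0 < N) (hKN : 1 + 1 / N ≤ K)
    (A : Set X) (h : X → X) (hinj : InjOn h A)
    (hdom : A ⊆ ball x r) (hrng : MapsTo h A (ball x r))
    (hbil : BilipschitzOn K h A) (hgood : NBigoodOn N x r h A) :
    BilipschitzOn K (fun z => if z ∈ A then h z else z) (A ∪ (ball x r)ᶜ) :=
  bilipschitz_union_id_general X x r K N hN hKN A h hbil hgood
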